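/- If μ ∈ M^e(Σ_D), then exactly one of the following holds: μ(A_0) = 1, μ(A_α) = 1, or μ(A_β) = 1. -/

import Mathlib

open MeasureTheory Topology Filter
open scoped ENNReal NNReal


/-! ### The alphabet of the (M,N) Dyck–Motzkin shift -/

/-- The alphabet `D = D_α ∪ D_0 ∪ D_β` of the `(M,N)` Dyck–Motzkin shift:
`la k` is the left bracket `α_k`, `u k` is the unit `1_k`, `ra k` is the right bracket `β_k`. -/
inductive DMSym (M N : ℕ) : Type where
  | la : Fin M → DMSym M N
  | u  : Fin N → DMSym M N
  | ra : Fin M → DMSym M N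
deriving DecidableEq

namespace DMSym

def equivSum (M N : ℕ) : DMSym M N ≃ (Fin M ⊕ Fin N ⊕ Fin M) where
  toFun s := match s with
    | .la k => Sum.inl k
    | .u k => Sum.inr (Sum.inl k)
    | .ra k => Sum.inr (Sum.inr k)
  invFun s := match s with
    | Sum.inl k => .la k
    | Sum.inr (Sum.inl k) => .u k
    | Sum.inr (Sum.inr k) => .ra k
  left_inv s := by cases s <;> rfl
  right_inv s := by rcases s with k | k | k <;> rfl

instance (M N : ℕ) : Fintype (DMSym M N) := Fintype.ofEquiv _ (equivSum M N).symm
instance (M N : ℕ) : TopologicalSpace (DMSym M N) := ⊥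
instance (M N : ℕ) : DiscreteTopology (DMSym M N) := ⟨rfl⟩
instance (M N : ℕ) : MeasurableSpace (DMSym M N) := ⊤
instance (M N : ℕ) : BorelSpace (DMSym M N) := ⟨borel_eq_top_of_discrete.symm⟩

end DMSym

/-- Nonzero elements of the Dyck–Motzkin monoid with zero are represented in normal form:
`some (bs, as)` is the reduced word `β_{bs(0)} ⋯ β_{bs(r)} α_{as(0)} ⋯ α_{as(s)}`
(in particular `some ([], [])` is the unit element `1`); `none` is the zero element `0`. -/
abbrev DyckElem (M : ℕ) := Option (List (Fin M) × List (Fin M))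

/-- Multiplication, in the Dyck–Motzkin monoid with zero, of an element in normal form on
the right by a generator: units are absorbed, a left bracket is appended, and a right bracket
either closes the last left bracket (if the indices match), is appended (if there is no left
bracket to close), or produces the zero element (if the indices do not match). -/
def dyckStep {M N : ℕ} : DyckElem M → DMSym M N → DyckElem M
  | none, _ => none
  | some (bs, as), .la k => some (bs, as ++ [k])
  | some (bs, as), .u _ => some (bs, as)
  | some (bs, as), .ra k =>
      match as.getLast? with
      | none => some (bs ++ [k], [])
      | some j => if j = k then some (bs, as.dropLast) else none

/-- `red w` is the image of the word `w` in the Dyck–Motzkin monoid with zero. -/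
def red {M N : ℕ} (w : List (DMSym M N)) : DyckElem M :=
  w.foldl dyckStep (some ([], []))

/-- The word `x_j x_{j+1} ⋯ x_k` read off a bi-infinite sequence `x`. -/
def wordAt {M N : ℕ} (x : ℤ → DMSym M N) (j k : ℤ) : List (DMSym M N) :=
  (List.range (k + 1 - j).toNat).map fun n => x (j + n)

/-- The `(M,N)` Dyck–Motzkin shift `Σ_D`. -/
def SigmaD (M N : ℕ) : Set (ℤ → DMSym M N) :=
  {x | ∀ j k : ℤ, j < k → red (wordAt x j k) ≠ none}

/-- The left shift `σ`. -/
def shift {A : Type*} : (ℤ → A) → (ℤ → A) := fun x i => x (i + 1)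

/-- The inverse `σ⁻¹` of the left shift. -/
def shiftInv {A : Type*} : (ℤ → A) → (ℤ → A) := fun x i => x (i - 1)

lemma wordAt_shift {M N : ℕ} (x : ℤ → DMSym M N) (j k : ℤ) :
    wordAt (shift x) j k = wordAt x (j + 1) (k + 1) := by
  simp only [wordAt, shift]
  rw [show (k + 1 + 1 - (j + 1) : ℤ) = k + 1 - j by ring]
  exact List.map_congr_left fun n _ => by rw [show (j + n + 1 : ℤ) = j + 1 + n by ring]

lemma shift_mem_SigmaD {M N : ℕ} {x : ℤ → DMSym M N} (hx : x ∈ SigmaD M N) :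
    shift x ∈ SigmaD M N := by
  intro j k hjk
  rw [wordAt_shift]
  exact hx (j + 1) (k + 1) (by omega)

/-- The left shift acting on `Σ_D`. -/
def shiftD (M N : ℕ) : ↥(SigmaD M N) → ↥(SigmaD M N) :=
  fun x => ⟨shift x.val, shift_mem_SigmaD x.property⟩

section Generic
variable {X : Type*} [MeasurableSpace X]

/-- The set of `T`-invariant Borel probability measures. -/
def InvMeas (T : X → X) : Set (ProbabilityMeasure X) :=
  {μ | MeasurePreserving T μ.toMeasure μ.toMeasure}

/-- The set of `T`-invariant ergodic Borel probability measures. -/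
def ErgMeas (T : X → X) : Set (ProbabilityMeasure X) :=
  {μ | Ergodic T μ.toMeasure}

/-- A `CO`-measure: an invariant ergodic probability measure supported on the orbit of a
single periodic point. -/
def IsCOMeas (T : X → X) (μ : ProbabilityMeasure X) : Prop :=
  Ergodic T μ.toMeasure ∧
    ∃ (x : X) (n : ℕ), 0 < n ∧ T^[n] x = x ∧
      μ.toMeasure {y | ∃ k : ℕ, y = T^[k] x} = 1

/-- Convexity for a set of probability measures: it is stable under taking the convex
combination `t•μ + (1-t)•ν` of any two of its members. -/
def ConvexMeasSet (U : Set (ProbabilityMeasure X)) : Prop :=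
  ∀ μ ∈ U, ∀ ν ∈ U, ∀ t : ℝ≥0∞, t ≤ 1 → ∀ ρ : ProbabilityMeasure X,
    ρ.toMeasure = t • μ.toMeasure + (1 - t) • ν.toMeasure → ρ ∈ U

/-- A measure is fully supported if it gives positive measure to every non-empty open set. -/
def FullSupp [TopologicalSpace X] (μ : ProbabilityMeasure X) : Prop :=
  ∀ U : Set X, IsOpen U → U.Nonempty → 0 < μ.toMeasure U

/-- Measure-theoretic isomorphism of the measure-preserving systems `(X,T,μ)` and `(Y,S,ν)`. -/
def MeasureIso {Y : Type*} [MeasurableSpace Y] (T : X → X) (S : Y → Y)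
    (μ : Measure X) (ν : Measure Y) : Prop :=
  ∃ (φ : X → Y) (ψ : Y → X), Measurable φ ∧ Measurable ψ ∧
    Measure.map φ μ = ν ∧ Measure.map ψ ν = μ ∧
    (∀ᵐ x ∂μ, ψ (φ x) = x) ∧ (∀ᵐ y ∂ν, φ (ψ y) = y) ∧
    (∀ᵐ x ∂μ, φ (T x) = S (φ x))

/-- The system `(X,T,μ)` is Bernoulli: it is measure-theoretically isomorphic to a two-sided
Bernoulli shift, i.e. the left shift on `ℤ → ℕ` equipped with an i.i.d. product measure
(determined by requiring that the measures of all cylinder sets factorize according to a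
fixed distribution `p`). -/
def IsBernoulli (T : X → X) (μ : Measure X) : Prop :=
  ∃ (p : ℕ → ℝ≥0∞) (ν : Measure (ℤ → ℕ)), (∑' n, p n) = 1 ∧
    IsProbabilityMeasure ν ∧
    (∀ (n : ℕ) (w : Fin n → ℕ) (j : ℤ),
      ν {y | ∀ i : Fin n, y (j + (i : ℕ)) = w i} = ∏ i, p (w i)) ∧
    MeasureIso T shift μ ν

end Generic

/-- `M(Σ_D)`: the space of shift-invariant Borel probability measures on `Σ_D`,
endowed with the weak* topology. -/
def MinvD (M N : ℕ) : Set (ProbabilityMeasure ↥(SigmaD M N)) := InvMeas (shiftD M N)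

/-- `M^e(Σ_D)`: the shift-invariant ergodic Borel probability measures on `Σ_D`. -/
def MergD (M N : ℕ) : Set (ProbabilityMeasure ↥(SigmaD M N)) := ErgMeas (shiftD M N)

/-- The integral `∫ f dμ`. -/
noncomputable def intCf {M N : ℕ} (f : C(↥(SigmaD M N), ℝ))
    (μ : ProbabilityMeasure ↥(SigmaD M N)) : ℝ := ∫ x, f x ∂μ.toMeasure

/-- `M_max(f)`: the set of `f`-maximizing measures, i.e. the shift-invariant measures
attaining `sup { ∫ f dν : ν ∈ M(Σ_D) }`. -/
def Mmax (M N : ℕ) (f : C(↥(SigmaD M N), ℝ)) : Set (ProbabilityMeasure ↥(SigmaD M N)) :=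
  {μ ∈ MinvD M N | ∀ ν ∈ MinvD M N, intCf f ν ≤ intCf f μ}

/-- `G_j(x)`: `1` on left brackets, `-1` on right brackets, `0` on units. -/
def Gfun {M N : ℕ} (x : ℤ → DMSym M N) (j : ℤ) : ℤ :=
  match x j with
  | .la _ => 1
  | .u _ => 0
  | .ra _ => -1

/-- `H_i(x) = Σ_{j=0}^{i-1} G_j(x)` for `i ≥ 1`, `H_i(x) = -Σ_{j=i}^{-1} G_j(x)` for
`i ≤ -1`, and `H_0(x) = 0`. -/
def Hfun {M N : ℕ} (x : ℤ → DMSym M N) (i : ℤ) : ℤ :=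
  if 0 ≤ i then ∑ j ∈ Finset.range i.toNat, Gfun x (j : ℤ)
  else -∑ j ∈ Finset.range (-i).toNat, Gfun x (i + (j : ℤ))

/-- The set `A_0`. -/
def A0set (M N : ℕ) : Set (ℤ → DMSym M N) :=
  SigmaD M N ∩ {x | ∀ i : ℤ,
    (∃ j : ℕ, 1 ≤ j ∧ Hfun x (i + (j : ℤ)) = Hfun x i) ∧
    (∃ j : ℕ, 1 ≤ j ∧ Hfun x (i - (j : ℤ)) = Hfun x i)}

/-- The set `A_α`. -/
def AalphaSet (M N : ℕ) : Set (ℤ → DMSym M N) :=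
  SigmaD M N ∩ {x | Tendsto (Hfun x) atTop atTop ∧ Tendsto (Hfun x) atBot atBot}

/-- The set `A_β`. -/
def AbetaSet (M N : ℕ) : Set (ℤ → DMSym M N) :=
  SigmaD M N ∩ {x | Tendsto (Hfun x) atTop atBot ∧ Tendsto (Hfun x) atBot atTop}


/-!
Write `m = ∫ G₀ dμ`. The heights `H_n(x)` and `-H_{-n}(x)` (`n ≥ 0`) are the Birkhoff sums
of `G₀` along `σ` and of `G₀ ∘ σ⁻¹` along `σ⁻¹`, two ergodic systems in which the observable
has mean `m`. By the pointwise ergodic theorem for bounded observables (Katznelson–Weiss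
stopping-time argument), `H_n / n → m` and `H_{-n} / n → -m` almost surely, so `m > 0` puts
almost every point in `A_α` and `m < 0` puts it in `A_β`. If `m = 0`, Atkinson's recurrence
theorem applies: the times at which an orbit visits the set of points whose integer Birkhoff
sums never vanish again carry pairwise distinct values of a sum that grows sublinearly, so
that set is null. Applied to `σ` and `σ⁻¹` along whole orbits, this puts almost every point
in `A_0`. The three sets are pairwise disjoint, so exactly one of them has full measure.
-/

lemma Filter.Frequently.mul_lt_of_sub_le {a b : ℕ → ℝ} {C q r : ℝ}
    (hab : ∀ n, a n - C ≤ b n) (hrq : r < q) (h : ∃ᶠ n in atTop, q * n < a n) :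
    ∃ᶠ n in atTop, r * n < b n := by
  have hC : ∀ᶠ n : ℕ in atTop, C < (q - r) * n :=
    (tendsto_natCast_atTop_atTop.const_mul_atTop (sub_pos.2 hrq)).eventually_gt_atTop C
  exact (h.and_eventually hC).mono fun n ⟨h1, h2⟩ => by linarith [hab n]

lemma nonpos_of_forall_natCast_mul_le {a K : ℝ} (h : ∀ n : ℕ, n * a ≤ K) : a ≤ 0 := by
  by_contra! ha
  obtain ⟨n, hn⟩ := exists_nat_gt (K / a)
  linarith [h n, (div_lt_iff₀ ha).1 hn]

lemma Int.tendsto_atTop_iff_natCast {α : Type*} {f : ℤ → α} {l : Filter α} :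
    Tendsto f atTop l ↔ Tendsto (fun n : ℕ => f n) atTop l := by
  rw [← Nat.map_cast_int_atTop, tendsto_map'_iff]
  rfl

lemma Int.tendsto_atBot_iff_natCast {α : Type*} {f : ℤ → α} {l : Filter α} :
    Tendsto f atBot l ↔ Tendsto (fun n : ℕ => f (-n)) atTop l := by
  rw [← map_neg_atTop, tendsto_map'_iff, Int.tendsto_atTop_iff_natCast]
  rfl

section BirkhoffSum
variable {X : Type*} {T : X → X} {f : X → ℝ}

lemma abs_birkhoffSum_apply_sub_le {C : ℝ} (hf : ∀ x, |f x| ≤ C) (n : ℕ) (x : X) :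
    |birkhoffSum T f n (T x) - birkhoffSum T f n x| ≤ 2 * C := by
  rw [birkhoffSum_apply_sub_birkhoffSum]
  linarith [abs_sub (f (T^[n] x)) (f x), hf (T^[n] x), hf x]

lemma neg_mul_le_birkhoffSum {b : ℝ} (hf : ∀ x, -b ≤ f x) (n : ℕ) (x : X) :
    -b * n ≤ birkhoffSum T f n x := by
  have := Finset.card_nsmul_le_sum (Finset.range n) (fun i => f (T^[i] x)) (-b) fun i _ => hf _
  simpa [birkhoffSum, mul_comm] using this

lemma birkhoffSum_nonneg (hf : ∀ x, 0 ≤ f x) (n : ℕ) (x : X) : 0 ≤ birkhoffSum T f n x :=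
  Finset.sum_nonneg fun _ _ => hf _

lemma birkhoffSum_eq_natCast_mul_birkhoffAverage (n : ℕ) (x : X) :
    birkhoffSum T f n x = n * birkhoffAverage ℝ T f n x := by
  rcases eq_or_ne n 0 with rfl | hn
  · simp
  · simp [birkhoffAverage, hn]

lemma exists_abs_birkhoffSum_le_add_mul {x : X}
    (h : Tendsto (birkhoffAverage ℝ T f · x) atTop (𝓝 0)) {ε : ℝ} (hε : 0 < ε) :
    ∃ K, ∀ n k, k ≤ n → |birkhoffSum T f k x| ≤ K + ε * n := by
  obtain ⟨N₀, hN₀⟩ := eventually_atTop.1 <|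
    ((tendsto_order.1 h).1 (-ε) (neg_lt_zero.2 hε)).and ((tendsto_order.1 h).2 ε hε)
  refine ⟨∑ k ∈ Finset.range N₀, |birkhoffSum T f k x|, fun n k hkn => ?_⟩
  have hK : 0 ≤ ∑ k ∈ Finset.range N₀, |birkhoffSum T f k x| :=
    Finset.sum_nonneg fun _ _ => abs_nonneg _
  have hεn : ε * k ≤ ε * n := by gcongr
  rcases lt_or_ge k N₀ with hk | hk
  · linarith [Finset.single_le_sum (fun i _ => abs_nonneg (birkhoffSum T f i x))
      (Finset.mem_range.2 hk), mul_nonneg hε.le (Nat.cast_nonneg n)]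
  rcases k.eq_zero_or_pos with rfl | hk0
  · simp only [birkhoffSum_zero, abs_zero]
    positivity
  obtain ⟨h1, h2⟩ := hN₀ k hk
  rw [birkhoffSum_eq_natCast_mul_birkhoffAverage, abs_mul, Nat.abs_cast]
  have hk' : (0 : ℝ) < k := by exact_mod_cast hk0
  nlinarith [abs_lt.2 ⟨h1, h2⟩]

lemma le_of_tendsto_birkhoffAverage_of_le {x : X} {δ A ε : ℝ}
    (h : Tendsto (birkhoffAverage ℝ T f · x) atTop (𝓝 δ))
    (hle : ∀ n, birkhoffSum T f n x ≤ A + ε * n) : δ ≤ ε := by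
  have hlim : Tendsto (fun n : ℕ => A / n + ε) atTop (𝓝 ε) := by
    simpa using (tendsto_const_div_atTop_nhds_zero_nat A).add_const ε
  refine le_of_tendsto_of_tendsto h hlim <| (eventually_gt_atTop 0).mono fun n hn => ?_
  have hn' : (0 : ℝ) < n := by exact_mod_cast hn
  simp only [birkhoffAverage, smul_eq_mul]
  rw [← div_eq_inv_mul, div_le_iff₀ hn', add_mul, div_mul_cancel₀ _ hn'.ne']
  linarith [hle n]

variable {g : X → ℤ} {x : X} {m : ℝ}

lemma Int.cast_birkhoffSum (n : ℕ) (x : X) :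
    ((birkhoffSum T g n x : ℤ) : ℝ) = birkhoffSum T (fun y => (g y : ℝ)) n x :=
  map_birkhoffSum (Int.castAddHom ℝ) T g n x

lemma tendsto_birkhoffSum_atTop
    (h : Tendsto (birkhoffAverage ℝ T (fun y => (g y : ℝ)) · x) atTop (𝓝 m)) (hm : 0 < m) :
    Tendsto (birkhoffSum T g · x) atTop atTop := by
  rw [← tendsto_intCast_atTop_iff (R := ℝ)]
  simp only [Int.cast_birkhoffSum, birkhoffSum_eq_natCast_mul_birkhoffAverage]
  exact tendsto_natCast_atTop_atTop.atTop_mul_pos hm h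

lemma tendsto_birkhoffSum_atBot
    (h : Tendsto (birkhoffAverage ℝ T (fun y => (g y : ℝ)) · x) atTop (𝓝 m)) (hm : m < 0) :
    Tendsto (birkhoffSum T g · x) atTop atBot := by
  rw [← tendsto_intCast_atBot_iff (R := ℝ)]
  simp only [Int.cast_birkhoffSum, birkhoffSum_eq_natCast_mul_birkhoffAverage]
  exact tendsto_natCast_atTop_atTop.atTop_mul_neg hm h

-- The times at which the orbit visits `s` carry pairwise distinct values of `birkhoffSum T g`.
lemma birkhoffSum_indicator_le {s : Set X}
    (hs : ∀ y ∈ s, ∀ n, 0 < n → birkhoffSum T g n y ≠ 0) {n R : ℕ}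
    (hR : ∀ k < n, |birkhoffSum T g k x| ≤ R) :
    birkhoffSum T (s.indicator 1) n x ≤ (2 * R + 1 : ℝ) := by
  classical
  set V := (Finset.range n).filter fun k => T^[k] x ∈ s
  have hcount : birkhoffSum T (s.indicator 1) n x = (V.card : ℝ) := by
    simp [V, birkhoffSum, Set.indicator_apply, Finset.sum_boole]
  have hne : ∀ a ∈ V, ∀ b, a < b → birkhoffSum T g a x ≠ birkhoffSum T g b x := by
    intro a ha b hab heq
    refine hs _ (Finset.mem_filter.1 ha).2 (b - a) (by omega) ?_
    have := birkhoffSum_add T g a (b - a) x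
    rw [Nat.add_sub_cancel' hab.le] at this
    omega
  have hinj : Set.InjOn (birkhoffSum T g · x) V := fun a ha b hb hab => by
    by_contra h
    rcases lt_or_gt_of_ne h with h | h
    exacts [hne a ha b h hab, hne b hb a h hab.symm]
  have hmaps : Set.MapsTo (birkhoffSum T g · x) V (Finset.Icc (-R : ℤ) R) := fun k hk =>
    Finset.mem_Icc.2 (abs_le.1 (hR k (Finset.mem_range.1 (Finset.mem_filter.1 hk).1)))
  have hcard := Finset.card_le_card_of_injOn _ hmaps hinj
  rw [Int.card_Icc, show (R + 1 - -R : ℤ) = ((2 * R + 1 : ℕ) : ℤ) by push_cast; ring,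
    Int.toNat_natCast] at hcard
  rw [hcount]
  exact_mod_cast hcard

end BirkhoffSum

section StoppingTime
variable {X : Type*} {T : X → X} {f : X → ℝ}

def stayBelow (T : X → X) (f : X → ℝ) (c : ℝ) (N : ℕ) : Set X :=
  {x | ∀ n, 0 < n → n ≤ N → birkhoffSum T f n x < c * n}

-- Cut `[0, L)` greedily: a point outside `stayBelow T f c N` starts a block of length at most
-- `N` with average at least `c`, a point inside it a block of length one costing at most `c + b`.
lemma mul_sub_le_birkhoffSum {b c : ℝ} (hf : ∀ x, -b ≤ f x) (hbc : 0 ≤ c + b) (N L : ℕ)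
    (x : X) :
    c * L - (c + b) * (birkhoffSum T ((stayBelow T f c N).indicator 1) L x + N) ≤
      birkhoffSum T f L x := by
  have hV : ∀ L y, (0 : ℝ) ≤ birkhoffSum T ((stayBelow T f c N).indicator 1) L y :=
    birkhoffSum_nonneg fun y => Set.indicator_nonneg (fun _ _ => zero_le_one) y
  induction L using Nat.strong_induction_on generalizing x with
  | _ L ih =>
  rcases L.eq_zero_or_pos with rfl | hL
  · simpa using mul_nonneg hbc (Nat.cast_nonneg N)
  by_cases hx : x ∈ stayBelow T f c N
  · obtain ⟨L, rfl⟩ := Nat.exists_eq_add_of_lt hL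
    simp only [zero_add, birkhoffSum_succ', Set.indicator_of_mem hx, Pi.one_apply]
    push_cast
    linarith [ih L (by omega) (T x), hf x]
  simp only [stayBelow, Set.mem_ofPred_eq, not_forall, not_lt] at hx
  obtain ⟨n, hn0, hnN, hn⟩ := hx
  rcases le_or_gt n L with hnL | hLn
  · obtain ⟨k, rfl⟩ := Nat.exists_eq_add_of_le hnL
    simp only [birkhoffSum_add]
    push_cast
    linarith [ih k (by omega) (T^[n] x), mul_nonneg hbc (hV n x)]
  · have hLV : (L : ℝ) ≤ birkhoffSum T ((stayBelow T f c N).indicator 1) L x + N := by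
      have : (L : ℝ) ≤ N := by exact_mod_cast (hLn.trans_le hnN).le
      linarith [hV L x]
    linarith [neg_mul_le_birkhoffSum (T := T) hf L x, mul_le_mul_of_nonneg_left hLV hbc]

-- `limsup (birkhoffSum T f n x) / n ≥ q`, through rational thresholds to keep it measurable.
def limsupAvgGe (T : X → X) (f : X → ℝ) (q : ℝ) : Set X :=
  {x | ∀ r : ℚ, (r : ℝ) < q → ∃ᶠ n in atTop, (r : ℝ) * n < birkhoffSum T f n x}

lemma preimage_limsupAvgGe {C : ℝ} (hf : ∀ x, |f x| ≤ C) (q : ℝ) :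
    T ⁻¹' limsupAvgGe T f q = limsupAvgGe T f q := by
  have hC := abs_birkhoffSum_apply_sub_le (T := T) hf
  ext x
  refine ⟨fun hx r hr => ?_, fun hx r hr => ?_⟩ <;>
    obtain ⟨r', hrr', hr'q⟩ := exists_rat_btwn hr
  · exact (hx r' hr'q).mul_lt_of_sub_le (C := 2 * C)
      (fun n => by linarith [(abs_le.1 (hC n x)).2]) hrr'
  · exact (hx r' hr'q).mul_lt_of_sub_le (C := 2 * C)
      (fun n => by linarith [(abs_le.1 (hC n x)).1]) hrr'

lemma eventually_birkhoffAverage_lt {q : ℝ} {x : X} (hx : x ∉ limsupAvgGe T f q) :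
    ∀ᶠ n in atTop, birkhoffAverage ℝ T f n x < q := by
  simp only [limsupAvgGe, Set.mem_ofPred_eq, not_forall, not_frequently, not_lt] at hx
  obtain ⟨r, hrq, hr⟩ := hx
  filter_upwards [hr, eventually_gt_atTop 0] with n hn hn0
  rw [birkhoffSum_eq_natCast_mul_birkhoffAverage, mul_comm] at hn
  exact (le_of_mul_le_mul_right hn (by positivity)).trans_lt hrq

end StoppingTime

section MeasurePreserving
variable {X : Type*} [MeasurableSpace X] {μ : Measure X} {T : X → X} {f : X → ℝ}

lemma MeasureTheory.MeasurePreserving.integral_comp_of_aestronglyMeasurable {Y : Type*}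
    [MeasurableSpace Y] {ν : Measure Y} {φ : X → Y} {g : Y → ℝ}
    (hφ : MeasurePreserving φ μ ν) (hg : AEStronglyMeasurable g ν) :
    ∫ x, g (φ x) ∂μ = ∫ y, g y ∂ν := by
  rw [← hφ.map_eq, integral_map hφ.measurable.aemeasurable (hφ.map_eq ▸ hg)]

lemma MeasureTheory.MeasurePreserving.ae_forall_iterate {p : X → Prop}
    (hT : MeasurePreserving T μ μ) (h : ∀ᵐ x ∂μ, p x) :
    ∀ᵐ x ∂μ, ∀ n, p (T^[n] x) :=
  ae_all_iff.2 fun n => (hT.iterate n).quasiMeasurePreserving.ae h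

lemma measurable_birkhoffSum {M : Type*} [AddCommMonoid M] [MeasurableSpace M] [MeasurableAdd₂ M]
    {g : X → M} (hT : Measurable T) (hg : Measurable g) (n : ℕ) :
    Measurable (birkhoffSum T g n) :=
  Finset.measurable_sum _ fun i _ => hg.comp (hT.iterate i)

lemma integrable_birkhoffSum (hT : MeasurePreserving T μ μ) (hf : Integrable f μ) (n : ℕ) :
    Integrable (birkhoffSum T f n) μ :=
  integrable_finsetSum _ fun i _ =>
    ((hT.iterate i).integrable_comp hf.aestronglyMeasurable).2 hf

lemma integral_birkhoffSum (hT : MeasurePreserving T μ μ) (hf : Integrable f μ) (n : ℕ) :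
    ∫ x, birkhoffSum T f n x ∂μ = n * ∫ x, f x ∂μ := by
  simp only [birkhoffSum]
  rw [integral_finsetSum (f := fun i x => f (T^[i] x)) _ fun i _ =>
    ((hT.iterate i).integrable_comp hf.aestronglyMeasurable).2 hf]
  simp [(hT.iterate _).integral_comp_of_aestronglyMeasurable hf.aestronglyMeasurable]

lemma measurableSet_stayBelow (hT : Measurable T) (hf : Measurable f) (c : ℝ) (N : ℕ) :
    MeasurableSet (stayBelow T f c N) := by
  simp only [stayBelow, Set.ofPred_forall]
  exact .iInter fun n => .iInter fun _ => .iInter fun _ =>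
    measurableSet_lt (measurable_birkhoffSum hT hf n) measurable_const

lemma measurableSet_limsupAvgGe (hT : Measurable T) (hf : Measurable f) (q : ℝ) :
    MeasurableSet (limsupAvgGe T f q) := by
  simp only [limsupAvgGe, Set.ofPred_forall, frequently_atTop, Set.ofPred_exists, Set.ofPred_and]
  exact .iInter fun r => .iInter fun _ => .iInter fun N => .iUnion fun n =>
    (MeasurableSet.const _).inter
      (measurableSet_lt measurable_const (measurable_birkhoffSum hT hf n))

variable [IsProbabilityMeasure μ]

lemma sub_mul_measureReal_stayBelow_le_integral {b c : ℝ} (hT : MeasurePreserving T μ μ)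
    (hfm : Measurable f) (hfi : Integrable f μ) (hf : ∀ x, -b ≤ f x) (hbc : 0 ≤ c + b)
    (N : ℕ) : c - (c + b) * μ.real (stayBelow T f c N) ≤ ∫ x, f x ∂μ := by
  set B := stayBelow T f c N
  have hB : MeasurableSet B := measurableSet_stayBelow hT.measurable hfm c N
  have hVi : Integrable (B.indicator (1 : X → ℝ)) μ := (integrable_const 1).indicator hB
  suffices ∀ L : ℕ, L * (c - (c + b) * μ.real B - ∫ x, f x ∂μ) ≤ (c + b) * N by
    linarith [nonpos_of_forall_natCast_mul_le this]
  intro L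
  have hVL := (integrable_birkhoffSum hT hVi L).const_mul (c + b)
  have key : ∫ x, (c * L - (c + b) * N - (c + b) * birkhoffSum T (B.indicator 1) L x) ∂μ ≤
      ∫ x, birkhoffSum T f L x ∂μ :=
    integral_mono ((integrable_const _).sub hVL) (integrable_birkhoffSum hT hfi L) fun x => by
      linarith [mul_sub_le_birkhoffSum (T := T) hf hbc N L x]
  rw [integral_sub (integrable_const _) hVL, integral_const_mul, integral_birkhoffSum hT hVi,
    integral_birkhoffSum hT hfi, integral_indicator_one hB] at key
  simp only [integral_const, probReal_univ, smul_eq_mul, one_mul] at key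
  linarith

lemma sub_mul_measureReal_le_integral {b c : ℝ} (hT : MeasurePreserving T μ μ)
    (hfm : Measurable f) (hfi : Integrable f μ) (hf : ∀ x, -b ≤ f x) (hbc : 0 ≤ c + b) :
    c - (c + b) * μ.real {x | ∀ n, 0 < n → birkhoffSum T f n x < c * n} ≤
      ∫ x, f x ∂μ := by
  have hanti : Antitone (stayBelow T f c) := fun N N' h x hx n hn hnN' => hx n hn (hnN'.trans h)
  have hinter : ⋂ N, stayBelow T f c N = {x | ∀ n, 0 < n → birkhoffSum T f n x < c * n} := by
    ext x
    simp only [Set.mem_iInter, stayBelow, Set.mem_ofPred_eq]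
    exact ⟨fun h n hn => h n n hn le_rfl, fun h _ n hn _ => h n hn⟩
  have htend : Tendsto (fun N => μ.real (stayBelow T f c N)) atTop
      (𝓝 (μ.real (⋂ N, stayBelow T f c N))) :=
    (ENNReal.tendsto_toReal (measure_ne_top _ _)).comp <| tendsto_measure_iInter_atTop
      (fun N => (measurableSet_stayBelow hT.measurable hfm c N).nullMeasurableSet) hanti
      ⟨0, measure_ne_top _ _⟩
  rw [← hinter]
  exact le_of_tendsto (tendsto_const_nhds.sub (tendsto_const_nhds.mul htend))
    (Eventually.of_forall (sub_mul_measureReal_stayBelow_le_integral hT hfm hfi hf hbc))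

end MeasurePreserving

section ErgodicTheorem
variable {X : Type*} [MeasurableSpace X] {μ : Measure X} [IsProbabilityMeasure μ] {T : X → X}
  {f : X → ℝ} {C : ℝ}

-- The set is invariant, hence null or conull; if it were conull, the maximal inequality for a
-- threshold `c` between `∫ f` and `q` would give `c ≤ ∫ f`.
lemma measure_limsupAvgGe_eq_zero (hT : Ergodic T μ) (hfm : Measurable f) (hf : ∀ x, |f x| ≤ C)
    {q : ℝ} (hq : ∫ x, f x ∂μ < q) : μ (limsupAvgGe T f q) = 0 := by
  refine (hT.measure_self_or_compl_eq_zero (measurableSet_limsupAvgGe hT.measurable hfm q)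
    (preimage_limsupAvgGe hf q)).resolve_right fun hcompl => ?_
  obtain ⟨c, hmc, hcq⟩ := exists_rat_btwn hq
  have hsub : {x | ∀ n, 0 < n → birkhoffSum T f n x < c * n} ⊆ (limsupAvgGe T f q)ᶜ :=
    fun x hx hxq => ((hxq c hcq).and_eventually (eventually_gt_atTop 0)).exists.elim
      fun n ⟨h1, h2⟩ => (hx n h2).not_gt h1
  have hfi : Integrable f μ :=
    .of_bound hfm.aestronglyMeasurable C (.of_forall fun x => (Real.norm_eq_abs _).le.trans (hf x))
  have key := sub_mul_measureReal_le_integral (b := max C (-c)) hT.toMeasurePreserving hfm hfi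
    (fun x => by linarith [le_max_left C (-c), (abs_le.1 (hf x)).1])
    (by linarith [le_max_right C (-c)])
  rw [measureReal_def, measure_mono_null hsub hcompl, ENNReal.toReal_zero, mul_zero,
    sub_zero] at key
  exact hmc.not_ge key

theorem ae_eventually_birkhoffAverage_lt (hT : Ergodic T μ) (hfm : Measurable f)
    (hf : ∀ x, |f x| ≤ C) :
    ∀ᵐ x ∂μ, ∀ a, ∫ x, f x ∂μ < a →
      ∀ᶠ n in atTop, birkhoffAverage ℝ T f n x < a := by
  have hnot : ∀ᵐ x ∂μ, ∀ q : {q : ℚ // ∫ x, f x ∂μ < q}, x ∉ limsupAvgGe T f q :=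
    ae_all_iff.2 fun q =>
      measure_eq_zero_iff_ae_notMem.1 (measure_limsupAvgGe_eq_zero hT hfm hf q.2)
  filter_upwards [hnot] with x hx a ha
  obtain ⟨q, hmq, hqa⟩ := exists_rat_btwn ha
  exact (eventually_birkhoffAverage_lt (hx ⟨q, hmq⟩)).mono fun n hn => hn.trans hqa

theorem ae_tendsto_birkhoffAverage (hT : Ergodic T μ) (hfm : Measurable f)
    (hf : ∀ x, |f x| ≤ C) :
    ∀ᵐ x ∂μ, Tendsto (birkhoffAverage ℝ T f · x) atTop (𝓝 (∫ x, f x ∂μ)) := by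
  have hneg := ae_eventually_birkhoffAverage_lt hT hfm.neg (f := -f) fun x => by simpa using hf x
  filter_upwards [ae_eventually_birkhoffAverage_lt hT hfm hf, hneg] with x hup hlow
  refine tendsto_order.2 ⟨fun a ha => ?_, hup⟩
  have := hlow (-a) (by simpa [integral_neg] using ha)
  simpa [birkhoffAverage_neg] using this

theorem ae_exists_birkhoffSum_eq_zero {g : X → ℤ} (hT : Ergodic T μ) (hg : Measurable g)
    (hgC : ∀ x, |(g x : ℝ)| ≤ C) (h0 : ∫ x, (g x : ℝ) ∂μ = 0) :
    ∀ᵐ x ∂μ, ∃ n, 0 < n ∧ birkhoffSum T g n x = 0 := by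
  set W := {x | ∀ n, 0 < n → birkhoffSum T g n x ≠ 0}
  have hW : MeasurableSet W := by
    simp only [W, Set.ofPred_forall]
    exact .iInter fun n => .iInter fun _ =>
      (measurable_birkhoffSum hT.measurable hg n (measurableSet_singleton 0)).compl
  refine ae_iff.2 ?_
  simp only [not_exists, not_and]
  by_contra hne
  have hδ : 0 < μ.real W := ENNReal.toReal_pos hne (measure_ne_top _ _)
  obtain ⟨x, hxg, hxW⟩ := ((ae_tendsto_birkhoffAverage (f := fun y => (g y : ℝ)) hT
    (measurable_from_top.comp hg) hgC).and
    (ae_tendsto_birkhoffAverage (f := W.indicator 1) (C := 1) hT ((measurable_const).indicator hW)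
      fun x => by by_cases hx : x ∈ W <;> simp [hx])).exists
  rw [h0] at hxg
  rw [integral_indicator_one hW] at hxW
  obtain ⟨K, hK⟩ := exists_abs_birkhoffSum_le_add_mul hxg (div_pos hδ four_pos)
  have hK0 : 0 ≤ K := by simpa using hK 0 0 le_rfl
  have hbound : ∀ n : ℕ,
      birkhoffSum T (W.indicator 1) n x ≤ 2 * K + 3 + μ.real W / 2 * n := by
    intro n
    have hR : ∀ k < n, |birkhoffSum T g k x| ≤ ⌈K + μ.real W / 4 * n⌉₊ := fun k hk => by
      have := (hK n k hk.le).trans (Nat.le_ceil _)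
      rw [← Int.cast_birkhoffSum, ← Int.cast_abs] at this
      exact_mod_cast this
    have hceil := Nat.ceil_lt_add_one (by positivity : 0 ≤ K + μ.real W / 4 * n)
    linarith [birkhoffSum_indicator_le (s := W) (fun y hy => hy) hR]
  linarith [le_of_tendsto_birkhoffAverage_of_le hxW hbound]

end ErgodicTheorem

section Probability
variable {X : Type*} [MeasurableSpace X] {μ : Measure X} {s t u : Set X}

lemma measure_eq_one_of_ae_mem [IsProbabilityMeasure μ] (h : ∀ᵐ x ∂μ, x ∈ s) :
    μ s = 1 := by
  have hc : μ sᶜ = 0 := ae_iff.1 h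
  exact le_antisymm prob_le_one <| by simpa [hc] using measure_univ_le_add_compl (μ := μ) s

lemma measure_ne_one_of_ae_mem_of_disjoint (h : ∀ᵐ x ∂μ, x ∈ s) (hst : Disjoint s t) :
    μ t ≠ 1 := by
  rw [measure_mono_null hst.subset_compl_left (ae_iff.1 h)]
  exact zero_ne_one

lemma measure_eq_one_trichotomy [IsProbabilityMeasure μ] (hst : Disjoint s t)
    (hsu : Disjoint s u) (htu : Disjoint t u)
    (h : (∀ᵐ x ∂μ, x ∈ s) ∨ (∀ᵐ x ∂μ, x ∈ t) ∨ ∀ᵐ x ∂μ, x ∈ u) :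
    (μ s = 1 ∧ μ t ≠ 1 ∧ μ u ≠ 1) ∨ (μ t = 1 ∧ μ s ≠ 1 ∧ μ u ≠ 1) ∨
      (μ u = 1 ∧ μ s ≠ 1 ∧ μ t ≠ 1) := by
  rcases h with h | h | h
  · exact .inl ⟨measure_eq_one_of_ae_mem h, measure_ne_one_of_ae_mem_of_disjoint h hst,
      measure_ne_one_of_ae_mem_of_disjoint h hsu⟩
  · exact .inr (.inl ⟨measure_eq_one_of_ae_mem h,
      measure_ne_one_of_ae_mem_of_disjoint h hst.symm,
      measure_ne_one_of_ae_mem_of_disjoint h htu⟩)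
  · exact .inr (.inr ⟨measure_eq_one_of_ae_mem h,
      measure_ne_one_of_ae_mem_of_disjoint h hsu.symm,
      measure_ne_one_of_ae_mem_of_disjoint h htu.symm⟩)

end Probability

section Height
variable {M N : ℕ}

lemma Hfun_succ (x : ℤ → DMSym M N) (i : ℤ) : Hfun x (i + 1) = Hfun x i + Gfun x i := by
  rcases le_or_gt 0 i with h | h
  · rw [Hfun, Hfun, if_pos (by omega), if_pos h, show (i + 1).toNat = i.toNat + 1 by omega,
      Finset.sum_range_succ, Int.toNat_of_nonneg h]
  rcases eq_or_lt_of_le (show i ≤ -1 by omega) with rfl | h1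
  · simp [Hfun]
  rw [Hfun, Hfun, if_neg (by omega), if_neg (by omega),
    show (-i).toNat = (-(i + 1)).toNat + 1 by omega, Finset.sum_range_succ',
    Finset.sum_congr rfl fun j _ =>
      congrArg (Gfun x) (show i + ((j + 1 : ℕ) : ℤ) = i + 1 + j by push_cast; ring)]
  simp only [Nat.cast_zero, add_zero]
  ring

lemma Hfun_add_sub (x : ℤ → DMSym M N) (i j : ℤ) :
    Hfun x (i + j) - Hfun x i = Hfun (fun k => x (k + i)) j := by
  induction j using Int.induction_on with
  | zero => simp [Hfun]
  | succ j ih =>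
    rw [← add_assoc, Hfun_succ, Hfun_succ, ← ih]
    simp only [Gfun, add_comm (j : ℤ) i]
    ring
  | pred j ih =>
    have h1 := Hfun_succ x (i + (-j - 1))
    have h2 := Hfun_succ (fun k => x (k + i)) (-j - 1)
    rw [show i + (-j - 1) + 1 = i + -j by ring] at h1
    rw [show (-j - 1 : ℤ) + 1 = -j by ring] at h2
    have h3 : Gfun (fun k => x (k + i)) (-j - 1) = Gfun x (i + (-j - 1)) := by
      simp only [Gfun, add_comm _ i]
    linarith

lemma frequently_Hfun_eq_zero {x : ℤ → DMSym M N} (hx : x ∈ A0set M N) :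
    ∃ᶠ i in atTop, Hfun x i = 0 := by
  have key : ∀ n : ℕ, ∃ i : ℤ, n ≤ i ∧ Hfun x i = 0 := fun n => by
    induction n with
    | zero => exact ⟨0, le_rfl, by simp [Hfun]⟩
    | succ n ih =>
      obtain ⟨i, hni, hi⟩ := ih
      obtain ⟨j, hj, hij⟩ := (hx.2 i).1
      exact ⟨i + j, by push_cast; omega, hij.trans hi⟩
  exact frequently_atTop.2 fun a => (key a.toNat).imp fun i ⟨hi, h⟩ => ⟨by omega, h⟩

lemma disjoint_A0set_AalphaSet : Disjoint (A0set M N) (AalphaSet M N) :=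
  Set.disjoint_left.2 fun _ h0 hα =>
    ((frequently_Hfun_eq_zero h0).and_eventually (hα.2.1.eventually_ne_atTop 0)).exists.elim
      fun _ h => h.2 h.1

lemma disjoint_A0set_AbetaSet : Disjoint (A0set M N) (AbetaSet M N) :=
  Set.disjoint_left.2 fun _ h0 hβ =>
    ((frequently_Hfun_eq_zero h0).and_eventually (hβ.2.1.eventually_ne_atBot 0)).exists.elim
      fun _ h => h.2 h.1

lemma disjoint_AalphaSet_AbetaSet : Disjoint (AalphaSet M N) (AbetaSet M N) :=
  Set.disjoint_left.2 fun _ hα hβ => hα.2.1.not_tendsto disjoint_atTop_atBot hβ.2.1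

lemma mem_A0set_of_forall {x : ℤ → DMSym M N} (hx : x ∈ SigmaD M N)
    (h : ∀ i : ℤ, (∃ j : ℕ, 1 ≤ j ∧ Hfun (fun k => x (k + i)) j = 0) ∧
      ∃ j : ℕ, 1 ≤ j ∧ Hfun (fun k => x (k + i)) (-j) = 0) :
    x ∈ A0set M N :=
  ⟨hx, fun i => ⟨(h i).1.imp fun j ⟨hj, h0⟩ => ⟨hj, by linarith [Hfun_add_sub x i j]⟩,
    (h i).2.imp fun j ⟨hj, h0⟩ =>
      ⟨hj, by linarith [sub_eq_add_neg i j ▸ Hfun_add_sub x i (-j)]⟩⟩⟩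

end Height

section ShiftSpace
variable {M N : ℕ}

lemma wordAt_shiftInv (x : ℤ → DMSym M N) (j k : ℤ) :
    wordAt (shiftInv x) j k = wordAt x (j - 1) (k - 1) := by
  simp only [wordAt, shiftInv]
  rw [show (k - 1 + 1 - (j - 1) : ℤ) = k + 1 - j by ring]
  exact List.map_congr_left fun n _ => by rw [show (j + n - 1 : ℤ) = j - 1 + n by ring]

lemma shiftInv_mem_SigmaD {x : ℤ → DMSym M N} (hx : x ∈ SigmaD M N) :
    shiftInv x ∈ SigmaD M N := fun j k hjk => by
  rw [wordAt_shiftInv]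
  exact hx (j - 1) (k - 1) (by omega)

def shiftEquiv (M N : ℕ) : ↥(SigmaD M N) ≃ᵐ ↥(SigmaD M N) where
  toFun := shiftD M N
  invFun x := ⟨shiftInv x.val, shiftInv_mem_SigmaD x.property⟩
  left_inv x := Subtype.ext <| funext fun i => congrArg x.val (sub_add_cancel i 1)
  right_inv x := Subtype.ext <| funext fun i => congrArg x.val (add_sub_cancel_right i 1)
  measurable_toFun := Measurable.subtype_mk (f := fun x : ↥(SigmaD M N) => shift x.val)
    (measurable_pi_lambda _ fun _ => (measurable_pi_apply _).comp measurable_subtype_coe)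
  measurable_invFun := Measurable.subtype_mk (f := fun x : ↥(SigmaD M N) => shiftInv x.val)
    (measurable_pi_lambda _ fun _ => (measurable_pi_apply _).comp measurable_subtype_coe)

lemma val_shiftEquiv (x : ↥(SigmaD M N)) : (shiftEquiv M N x).val = shift x.val := rfl

lemma val_shiftEquiv_symm (x : ↥(SigmaD M N)) :
    ((shiftEquiv M N).symm x).val = shiftInv x.val := rfl

lemma val_iterate_shiftEquiv (x : ↥(SigmaD M N)) (n : ℕ) :
    ((shiftEquiv M N)^[n] x).val = fun k => x.val (k + n) := by
  induction n with
  | zero => simp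
  | succ n ih =>
    rw [Function.iterate_succ_apply', val_shiftEquiv, ih]
    exact funext fun k => congrArg x.val (by push_cast; ring)

lemma val_iterate_shiftEquiv_symm (x : ↥(SigmaD M N)) (n : ℕ) :
    ((shiftEquiv M N).symm^[n] x).val = fun k => x.val (k - n) := by
  induction n with
  | zero => simp
  | succ n ih =>
    rw [Function.iterate_succ_apply', val_shiftEquiv_symm, ih]
    exact funext fun k => congrArg x.val (by push_cast; ring)

def G₀ (M N : ℕ) (x : ↥(SigmaD M N)) : ℤ := Gfun x.val 0

lemma measurable_G₀ : Measurable (G₀ M N) :=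
  (measurable_from_top (f := fun s : DMSym M N => Gfun (fun _ => s) 0)).comp
    ((measurable_pi_apply 0).comp measurable_subtype_coe)

lemma abs_G₀_le (x : ↥(SigmaD M N)) : |(G₀ M N x : ℝ)| ≤ 1 := by
  simp only [G₀, Gfun]
  split <;> simp

lemma birkhoffSum_G₀ (x : ↥(SigmaD M N)) (n : ℕ) :
    birkhoffSum (shiftEquiv M N) (G₀ M N) n x = Hfun x.val n := by
  induction n with
  | zero => simp [Hfun]
  | succ n ih =>
    rw [birkhoffSum_succ, ih, Nat.cast_succ, Hfun_succ, G₀, val_iterate_shiftEquiv]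
    simp only [Gfun, zero_add]

lemma birkhoffSum_G₀_symm (x : ↥(SigmaD M N)) (n : ℕ) :
    birkhoffSum (shiftEquiv M N).symm (G₀ M N ∘ (shiftEquiv M N).symm) n x =
      -Hfun x.val (-n) := by
  induction n with
  | zero => simp [Hfun]
  | succ n ih =>
    rw [birkhoffSum_succ, ih, Function.comp_apply,
      ← Function.iterate_succ_apply' (shiftEquiv M N).symm n, G₀, val_iterate_shiftEquiv_symm]
    have := Hfun_succ x.val (-(n + 1 : ℕ))
    rw [show -((n + 1 : ℕ) : ℤ) + 1 = -n by push_cast; ring] at this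
    simp only [Gfun, zero_sub] at this ⊢
    linarith

lemma tendsto_Hfun_atTop_iff (x : ↥(SigmaD M N)) {l : Filter ℤ} :
    Tendsto (Hfun x.val) atTop l ↔
      Tendsto (birkhoffSum (shiftEquiv M N) (G₀ M N) · x) atTop l := by
  simp only [Int.tendsto_atTop_iff_natCast, birkhoffSum_G₀]

lemma tendsto_Hfun_atBot_iff (x : ↥(SigmaD M N)) {l : Filter ℤ} :
    Tendsto (Hfun x.val) atBot l ↔ Tendsto (fun n =>
      -birkhoffSum (shiftEquiv M N).symm (G₀ M N ∘ (shiftEquiv M N).symm) n x) atTop l := by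
  simp only [Int.tendsto_atBot_iff_natCast, birkhoffSum_G₀_symm, neg_neg]

end ShiftSpace

section ErgodicTrichotomy
variable {M N : ℕ} {μ : Measure ↥(SigmaD M N)} [IsProbabilityMeasure μ]

lemma ae_mem_A0set (hμ : Ergodic (shiftEquiv M N) μ) (h0 : ∫ x, (G₀ M N x : ℝ) ∂μ = 0) :
    ∀ᵐ x ∂μ, x.val ∈ A0set M N := by
  have h0' : ∫ x, ((G₀ M N ∘ (shiftEquiv M N).symm) x : ℝ) ∂μ = 0 := by
    rw [← h0]
    exact hμ.symm.toMeasurePreserving.integral_comp' (fun x => (G₀ M N x : ℝ))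
  have hret : ∀ᵐ y ∂μ, (∃ j : ℕ, 1 ≤ j ∧ Hfun y.val j = 0) ∧
      ∃ j : ℕ, 1 ≤ j ∧ Hfun y.val (-j) = 0 := by
    filter_upwards [ae_exists_birkhoffSum_eq_zero hμ measurable_G₀ abs_G₀_le h0,
      ae_exists_birkhoffSum_eq_zero hμ.symm (measurable_G₀.comp (shiftEquiv M N).symm.measurable)
        (fun _ => abs_G₀_le _) h0'] with y h1 h2
    refine ⟨h1.imp fun j ⟨hj, h⟩ => ⟨hj, ?_⟩, h2.imp fun j ⟨hj, h⟩ => ⟨hj, ?_⟩⟩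
    · rwa [birkhoffSum_G₀] at h
    · rwa [birkhoffSum_G₀_symm, neg_eq_zero] at h
  filter_upwards [hμ.toMeasurePreserving.ae_forall_iterate hret,
    hμ.symm.toMeasurePreserving.ae_forall_iterate hret] with x hfwd hbwd
  refine mem_A0set_of_forall x.2 fun i => ?_
  obtain ⟨n, rfl | rfl⟩ := Int.eq_nat_or_neg i
  · simpa only [val_iterate_shiftEquiv] using hfwd n
  · simpa only [val_iterate_shiftEquiv_symm, sub_eq_add_neg] using hbwd n

theorem ae_mem_A0set_or_AalphaSet_or_AbetaSet (hμ : Ergodic (shiftEquiv M N) μ) :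
    (∀ᵐ x ∂μ, x.val ∈ A0set M N) ∨ (∀ᵐ x ∂μ, x.val ∈ AalphaSet M N) ∨
      ∀ᵐ x ∂μ, x.val ∈ AbetaSet M N := by
  set e := shiftEquiv M N
  have hfwd := ae_tendsto_birkhoffAverage (f := fun y => (G₀ M N y : ℝ)) hμ
    (measurable_from_top.comp measurable_G₀) abs_G₀_le
  have hbwd := ae_tendsto_birkhoffAverage (f := fun y => (G₀ M N (e.symm y) : ℝ)) hμ.symm
    ((measurable_from_top.comp measurable_G₀).comp e.symm.measurable) fun _ => abs_G₀_le _
  rw [hμ.symm.toMeasurePreserving.integral_comp' fun x => (G₀ M N x : ℝ)] at hbwd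
  rcases lt_trichotomy (∫ x, (G₀ M N x : ℝ) ∂μ) 0 with hm | hm | hm
  · refine .inr (.inr ?_)
    filter_upwards [hfwd, hbwd] with x h1 h2
    exact ⟨x.2, (tendsto_Hfun_atTop_iff x).2 (tendsto_birkhoffSum_atBot h1 hm),
      (tendsto_Hfun_atBot_iff x).2
        (tendsto_neg_atBot_atTop.comp (tendsto_birkhoffSum_atBot h2 hm))⟩
  · exact .inl (ae_mem_A0set hμ hm)
  · refine .inr (.inl ?_)
    filter_upwards [hfwd, hbwd] with x h1 h2
    exact ⟨x.2, (tendsto_Hfun_atTop_iff x).2 (tendsto_birkhoffSum_atTop h1 hm),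
      (tendsto_Hfun_atBot_iff x).2
        (tendsto_neg_atTop_atBot.comp (tendsto_birkhoffSum_atTop h2 hm))⟩

end ErgodicTrichotomy

theorem ergodic_trichotomy_general (M N : ℕ)
    (μ : ProbabilityMeasure ↥(SigmaD M N)) (hμ : μ ∈ MergD M N) :
    (μ.toMeasure (Subtype.val ⁻¹' A0set M N) = 1 ∧
      μ.toMeasure (Subtype.val ⁻¹' AalphaSet M N) ≠ 1 ∧
      μ.toMeasure (Subtype.val ⁻¹' AbetaSet M N) ≠ 1) ∨
    (μ.toMeasure (Subtype.val ⁻¹' AalphaSet M N) = 1 ∧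
      μ.toMeasure (Subtype.val ⁻¹' A0set M N) ≠ 1 ∧
      μ.toMeasure (Subtype.val ⁻¹' AbetaSet M N) ≠ 1) ∨
    (μ.toMeasure (Subtype.val ⁻¹' AbetaSet M N) = 1 ∧
      μ.toMeasure (Subtype.val ⁻¹' A0set M N) ≠ 1 ∧
      μ.toMeasure (Subtype.val ⁻¹' AalphaSet M N) ≠ 1) :=
  measure_eq_one_trichotomy (disjoint_A0set_AalphaSet.preimage _)
    (disjoint_A0set_AbetaSet.preimage _) (disjoint_AalphaSet_AbetaSet.preimage _)
    (ae_mem_A0set_or_AalphaSet_or_AbetaSet hμ)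

/-- Lemma 2.1 (trichotomy): every shift-invariant ergodic measure on `Σ_D` gives full
measure to exactly one of the sets `A_0`, `A_α`, `A_β`. -/
theorem ergodic_trichotomy (M N : ℕ) (hM : 2 ≤ M)
    (μ : ProbabilityMeasure ↥(SigmaD M N)) (hμ : μ ∈ MergD M N) :
    (μ.toMeasure (Subtype.val ⁻¹' A0set M N) = 1 ∧
      μ.toMeasure (Subtype.val ⁻¹' AalphaSet M N) ≠ 1 ∧
      μ.toMeasure (Subtype.val ⁻¹' AbetaSet M N) ≠ 1) ∨
    (μ.toMeasure (Subtype.val ⁻¹' AalphaSet M N) = 1 ∧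
      μ.toMeasure (Subtype.val ⁻¹' A0set M N) ≠ 1 ∧
      μ.toMeasure (Subtype.val ⁻¹' AbetaSet M N) ≠ 1) ∨
    (μ.toMeasure (Subtype.val ⁻¹' AbetaSet M N) = 1 ∧
      μ.toMeasure (Subtype.val ⁻¹' A0set M N) ≠ 1 ∧
      μ.toMeasure (Subtype.val ⁻¹' AalphaSet M N) ≠ 1) :=
  ergodic_trichotomy_general M N μ hμ
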